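/- The splitting fields over ℚ of X^3 - 3X - 1, of X^3 - 3X^2 - 6X - 1, and of X^3 - 54X^2 - 57X - 1 coincide (Shanks' simplest cubics for m = 0, 3, 54). -/

import Mathlib

/-!
Each of these cubics is cyclic, so any one of its roots generates its splitting field. For two of
them, `f` and `g`, this shows up as rational polynomials `p` and `q` that restrict to mutually
inverse bijections between the roots of `f` and those of `g`. Every root of either cubic is then a
rational polynomial in a root of the other, so the two root fields coincide.
-/

open Polynomial IntermediateField

section

variable {F L : Type*} [Field F] [Field L] [Algebra F L]

theorem IntermediateField.aeval_mem {K : IntermediateField F L} {y : L} (hy : y ∈ K) (q : F[X]) :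
    aeval y q ∈ K :=
  aeval_coe K ⟨y, hy⟩ q ▸ (aeval (⟨y, hy⟩ : K) q).2

theorem rootSet_subset_adjoin_rootSet {f g p q : F[X]} (hg : g ≠ 0)
    (hp : ∀ x : L, aeval x f = 0 → aeval (aeval x p) g = 0)
    (hqp : ∀ x : L, aeval x f = 0 → aeval (aeval x p) q = x) :
    f.rootSet L ⊆ adjoin F (g.rootSet L) := by
  intro x hx
  have hfx := (mem_rootSet.mp hx).2
  have hpx : aeval x p ∈ adjoin F (g.rootSet L) :=
    subset_adjoin F _ (mem_rootSet.mpr ⟨hg, hp x hfx⟩)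
  exact hqp x hfx ▸ aeval_mem hpx q

theorem adjoin_rootSet_eq_of_leftInverse {f g p q : F[X]} (hf : f ≠ 0) (hg : g ≠ 0)
    (hp : ∀ x : L, aeval x f = 0 → aeval (aeval x p) g = 0)
    (hq : ∀ y : L, aeval y g = 0 → aeval (aeval y q) f = 0)
    (hqp : ∀ x : L, aeval x f = 0 → aeval (aeval x p) q = x)
    (hpq : ∀ y : L, aeval y g = 0 → aeval (aeval y q) p = y) :
    adjoin F (f.rootSet L) = adjoin F (g.rootSet L) :=
  le_antisymm (adjoin_le_iff.mpr (rootSet_subset_adjoin_rootSet hg hp hqp))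
    (adjoin_le_iff.mpr (rootSet_subset_adjoin_rootSet hf hq hpq))

end

noncomputable def shanksCubic (m : ℚ) : ℚ[X] := X ^ 3 - C m * X ^ 2 - C (m + 3) * X - 1

theorem shanksCubic_monic (m : ℚ) : (shanksCubic m).Monic := by
  unfold shanksCubic; monicity!

theorem shanksCubic_zero : shanksCubic 0 = X ^ 3 - 3 * X - 1 := by
  norm_num [shanksCubic, map_ofNat C]

theorem shanksCubic_three : shanksCubic 3 = X ^ 3 - 3 * X ^ 2 - 6 * X - 1 := by
  norm_num [shanksCubic, map_ofNat C]

theorem shanksCubic_fiftyFour : shanksCubic 54 = X ^ 3 - 54 * X ^ 2 - 57 * X - 1 := by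
  norm_num [shanksCubic, map_ofNat C]

section

variable {L : Type*} [Field L] [Algebra ℚ L]

theorem adjoin_rootSet_shanksCubic_zero_eq_three :
    adjoin ℚ ((shanksCubic 0).rootSet L) = adjoin ℚ ((shanksCubic 3).rootSet L) := by
  have := algebraRat.charZero L
  refine adjoin_rootSet_eq_of_leftInverse (shanksCubic_monic 0).ne_zero
    (shanksCubic_monic 3).ne_zero
    (p := -2 * X ^ 2 + X + 5) (q := C (-2 / 3) * X ^ 2 + C (7 / 3) * X + C (7 / 3))
    ?_ ?_ ?_ ?_ <;> intro x hx <;>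
    simp only [shanksCubic_zero, shanksCubic_three, map_add, map_sub, map_mul, map_pow,
      map_neg, map_one, aeval_X, aeval_C, map_ofNat, map_div₀] at hx ⊢
  · linear_combination (-8 * x ^ 3 + 12 * x ^ 2 + 18 * x - 19) * hx
  · linear_combination (-8 / 27 * x ^ 3 + 20 / 9 * x ^ 2 - 26 / 9 * x - 127 / 27) * hx
  · linear_combination (8 / 3 - 8 / 3 * x) * hx
  · linear_combination (32 / 9 - 8 / 9 * x) * hx

theorem adjoin_rootSet_shanksCubic_three_eq_fiftyFour :
    adjoin ℚ ((shanksCubic 3).rootSet L) = adjoin ℚ ((shanksCubic 54).rootSet L) := by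
  have := algebraRat.charZero L
  refine adjoin_rootSet_eq_of_leftInverse (shanksCubic_monic 3).ne_zero
    (shanksCubic_monic 54).ne_zero
    (p := C (-35 / 3) * X ^ 2 + C (112 / 3) * X + C (187 / 3))
    (q := C (-5 / 49) * X ^ 2 + C (271 / 49) * X + C (221 / 49))
    ?_ ?_ ?_ ?_ <;> intro x hx <;>
    simp only [shanksCubic_three, shanksCubic_fiftyFour, map_add, map_sub, map_mul, map_pow,
      map_neg, map_one, aeval_X, aeval_C, map_ofNat, map_div₀] at hx ⊢
  · linear_combination (-42875 / 27 * x ^ 3 + 94325 / 9 * x ^ 2 - 78890 / 9 * x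
      - 778267 / 27) * hx
  · linear_combination (-125 / 117649 * x ^ 3 + 13575 / 117649 * x ^ 2
      - 362790 / 117649 * x - 312859 / 117649) * hx
  · linear_combination (425 / 9 - 125 / 9 * x) * hx
  · linear_combination (6800 / 1029 - 125 / 1029 * x) * hx

end

theorem stmt15 :
    IntermediateField.adjoin ℚ
        ((X ^ 3 - 3 * X - 1 : ℚ[X]).rootSet (AlgebraicClosure ℚ)) =
      IntermediateField.adjoin ℚ
        ((X ^ 3 - 3 * X ^ 2 - 6 * X - 1 : ℚ[X]).rootSet (AlgebraicClosure ℚ)) ∧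
    IntermediateField.adjoin ℚ
        ((X ^ 3 - 3 * X ^ 2 - 6 * X - 1 : ℚ[X]).rootSet (AlgebraicClosure ℚ)) =
      IntermediateField.adjoin ℚ
        ((X ^ 3 - 54 * X ^ 2 - 57 * X - 1 : ℚ[X]).rootSet (AlgebraicClosure ℚ)) := by
  rw [← shanksCubic_zero, ← shanksCubic_three, ← shanksCubic_fiftyFour]
  exact ⟨adjoin_rootSet_shanksCubic_zero_eq_three, adjoin_rootSet_shanksCubic_three_eq_fiftyFour⟩
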